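/- arXiv:2502.05613 — 3 statements merged into one kernel-verified Lean document; each statement's English description precedes it below -/
import Mathlib

section
/- For every integer d ≥ 0, with n = 2^d and p(m) = binomial(m, m/2)·2^{-m} for even m, the product ∏_{ℓ=0}^{d-1} p(2^{d-ℓ})^{2^ℓ} equals n!/n^n. -/
theorem split_prob_product (d : ℕ) :
    ∏ ℓ ∈ Finset.range d,
        (((2 ^ (d - ℓ)).choose (2 ^ (d - ℓ) / 2) : ℝ) / 2 ^ (2 ^ (d - ℓ))) ^ (2 ^ ℓ)
      = (Nat.factorial (2 ^ d) : ℝ) / (2 ^ d : ℝ) ^ (2 ^ d : ℕ) := by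
  induction d with
  | zero => simp [Nat.factorial]
  | succ d ih =>
    rw [Finset.prod_range_succ']
    simp only [Nat.succ_sub_succ, Nat.sub_zero, pow_zero, pow_one]
    have hsq : ∀ ℓ ∈ Finset.range d,
        (((2 ^ (d - ℓ)).choose (2 ^ (d - ℓ) / 2) : ℝ) / 2 ^ (2 ^ (d - ℓ))) ^ (2 ^ (ℓ + 1))
        = ((((2 ^ (d - ℓ)).choose (2 ^ (d - ℓ) / 2) : ℝ) / 2 ^ (2 ^ (d - ℓ))) ^ (2 ^ ℓ)) ^ 2 := by
      intro ℓ _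
      rw [← pow_mul, pow_succ]
    rw [Finset.prod_congr rfl hsq, Finset.prod_pow, ih]
    set n := 2 ^ d with hn
    have h2 : 2 ^ (d + 1) = 2 * n := by rw [pow_succ]; ring
    have hhalf : 2 ^ (d + 1) / 2 = n := by omega
    have hhalf2 : 2 * n / 2 = n := by omega
    have hdn : ((2 : ℝ) ^ d) = (n : ℝ) := by rw [hn]; push_cast; ring
    have hdn2 : ((2 : ℝ) ^ (d + 1)) = 2 * (n : ℝ) := by rw [pow_succ, hdn]; ring
    rw [h2, hhalf2, hdn, hdn2]
    have hchoose : ((2 * n).choose n : ℝ) * (n.factorial : ℝ) * (n.factorial : ℝ)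
        = ((2 * n).factorial : ℝ) := by
      have := Nat.choose_mul_factorial_mul_factorial (show n ≤ 2 * n by omega)
      have h : 2 * n - n = n := by omega
      rw [h] at this
      exact_mod_cast congrArg (Nat.cast : ℕ → ℝ) this
    have hnn : ((n : ℝ)) ^ n ≠ 0 := by positivity
    have h2n : (2 : ℝ) ^ (2 * n) ≠ 0 := by positivity
    have hpow : (2 * (n : ℝ)) ^ (2 * n) = (2 : ℝ) ^ (2 * n) * ((n : ℝ) ^ n) ^ 2 := by
      rw [mul_pow, ← pow_mul]
      ring
    rw [hpow, div_pow, div_mul_div_comm, div_eq_div_iff (by positivity) (by positivity)]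
    linear_combination ((2:ℝ) ^ (2 * n) * ((n : ℝ) ^ n) ^ 2) * hchoose
end

section
/- Let p ∈ (0,1], k ∈ ℕ with p·k ≥ 2^{ε-1} for some ε ≥ 2, and let q' ∈ [1 - exp(-2^{ε-2}), 1]. Then q = 1 - (1 - p·q')^k satisfies q ≥ 1 - exp(-2^{ε-2}). -/
theorem large_eps_induction (p : ℝ) (hp : p ∈ Set.Ioc (0 : ℝ) 1) (k : ℕ) (ε : ℝ)
    (hε : 2 ≤ ε) (hpk : (2 : ℝ) ^ (ε - 1) ≤ p * k) (q' : ℝ)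
    (hq' : q' ∈ Set.Icc (1 - Real.exp (-(2 : ℝ) ^ (ε - 2))) 1) :
    1 - Real.exp (-(2 : ℝ) ^ (ε - 2)) ≤ 1 - (1 - p * q') ^ k := by
  obtain ⟨hp0, hp1⟩ := hp
  obtain ⟨hq1, hq2⟩ := hq'
  have hq'half : (1:ℝ)/2 ≤ q' := by
    have h1 : (1:ℝ) ≤ (2:ℝ) ^ (ε - 2) := by
      apply Real.one_le_rpow one_le_two (by linarith)
    have : Real.exp (-(2:ℝ) ^ (ε - 2)) ≤ Real.exp (-1) := by
      apply Real.exp_le_exp.2; linarith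
    have he : Real.exp (-1) ≤ 1/2 := by
      have h2 : (2:ℝ) ≤ Real.exp 1 := by nlinarith [Real.add_one_le_exp (1:ℝ)]
      rw [Real.exp_neg]
      rw [inv_le_comm₀ (Real.exp_pos 1) (by norm_num)]
      linarith
    linarith
  have hq'0 : 0 ≤ q' := by linarith
  have hpq1 : p * q' ≤ 1 := by nlinarith
  have hpq0 : 0 ≤ p * q' := by positivity
  have key : (1 - p * q') ^ k ≤ Real.exp (-(2:ℝ) ^ (ε - 2)) := by
    calc (1 - p * q') ^ k ≤ Real.exp (-(p * q')) ^ k := by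
          apply pow_le_pow_left₀ (by linarith)
          nlinarith [Real.add_one_le_exp (-(p * q'))]
      _ = Real.exp (-(p * q' * k)) := by
          rw [← Real.exp_nat_mul]; ring_nf
      _ ≤ Real.exp (-(2:ℝ) ^ (ε - 2)) := by
          apply Real.exp_le_exp.2
          have h2 : (2:ℝ) ^ (ε - 1) = (2:ℝ) ^ (ε - 2) * 2 := by
            rw [show ε - 1 = (ε - 2) + 1 by ring, Real.rpow_add two_pos, Real.rpow_one]
          have hk0 : (0:ℝ) ≤ (k:ℝ) := Nat.cast_nonneg k
          have : (2:ℝ) ^ (ε - 1) * (1/2) ≤ p * k * q' := by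
            have hpk0 : 0 ≤ p * k := by positivity
            nlinarith
          nlinarith [h2]
  linarith
end

section
/- Let S₁,…,Sₙ be independent random variables with Sᵢ geometrically distributed with parameter pᵢ ∈ (0,1). Then the joint entropy H(S₁,…,Sₙ) ≥ Σᵢ log₂(1/pᵢ) + Σᵢ (1-pᵢ). -/
/-!
Up to the factor `1 / log 2`, the summand is `negMulLog` of the joint mass function. Since
`negMulLog (x * y) = y * negMulLog x + x * negMulLog y`, entropy is additive over products of
probability mass functions, and the geometric law with parameter `p` has entropy `binEntropy p / p`
nats, i.e. `log (1 / p) + (1 - p) / p * log (1 / (1 - p))`. The bound then follows from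
`log (1 / (1 - p)) ≥ p` and `log 2 < 1`.
-/

open Real Finset

lemma mul_logb_one_div (b x : ℝ) : x * logb b (1 / x) = negMulLog x / log b := by
  rw [negMulLog, logb, one_div, log_inv]
  ring

section Additivity

variable {α β : Type*}

lemma hasSum_mul_of_nonneg {f : α → ℝ} {g : β → ℝ} {a b : ℝ}
    (hf₀ : 0 ≤ f) (hg₀ : 0 ≤ g) (hf : HasSum f a) (hg : HasSum g b) :
    HasSum (fun x : α × β => f x.1 * g x.2) (a * b) :=
  hf.mul hg (hf.summable.mul_of_nonneg hg.summable hf₀ hg₀)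

lemma hasSum_negMulLog_mul {f : α → ℝ} {g : β → ℝ} {Hf Hg : ℝ}
    (hf₀ : 0 ≤ f) (hg₀ : 0 ≤ g) (hf : HasSum f 1) (hg : HasSum g 1)
    (hHf : HasSum (fun a => negMulLog (f a)) Hf) (hHg : HasSum (fun b => negMulLog (g b)) Hg) :
    HasSum (fun x : α × β => negMulLog (f x.1 * g x.2)) (Hf + Hg) := by
  have hf₁ a : f a ≤ 1 := le_hasSum hf a fun b _ => hf₀ b
  have hg₁ b : g b ≤ 1 := le_hasSum hg b fun a _ => hg₀ a
  have hHf₀ : 0 ≤ fun a => negMulLog (f a) := fun a => negMulLog_nonneg (hf₀ a) (hf₁ a)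
  have hHg₀ : 0 ≤ fun b => negMulLog (g b) := fun b => negMulLog_nonneg (hg₀ b) (hg₁ b)
  have h := (hasSum_mul_of_nonneg hHf₀ hg₀ hHf hg).add (hasSum_mul_of_nonneg hf₀ hHg₀ hf hHg)
  rw [mul_one, one_mul] at h
  convert h using 2 with x
  rw [negMulLog_mul]
  ring

end Additivity

-- The first conjunct is carried along the induction because `hasSum_negMulLog_mul` needs it.
theorem hasSum_prod_and_hasSum_negMulLog_prod {n : ℕ} {α : Fin n → Type*} (q : ∀ i, α i → ℝ)
    {H : Fin n → ℝ} (hq₀ : ∀ i, 0 ≤ q i) (hq : ∀ i, HasSum (q i) 1)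
    (hH : ∀ i, HasSum (fun a => negMulLog (q i a)) (H i)) :
    HasSum (fun s : ∀ i, α i => ∏ i, q i (s i)) 1 ∧
      HasSum (fun s : ∀ i, α i => negMulLog (∏ i, q i (s i))) (∑ i, H i) := by
  induction n with
  | zero =>
    constructor <;> simp
  | succ n ih =>
    obtain ⟨hrest, hHrest⟩ := ih (fun i => q i.succ) (fun i => hq₀ i.succ) (fun i => hq i.succ)
      (fun i => hH i.succ)
    have hrest₀ : 0 ≤ fun s : ∀ i : Fin n, α i.succ => ∏ i, q i.succ (s i) :=
      fun s => prod_nonneg fun i _ => hq₀ i.succ (s i)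
    have hcons (a : α 0) (s : ∀ i : Fin n, α i.succ) :
        ∏ i, q i (Fin.cons a s i) = q 0 a * ∏ i, q i.succ (s i) := by
      simp [Fin.prod_univ_succ]
    refine ⟨(Fin.consEquiv α).hasSum_iff.mp ?_, (Fin.consEquiv α).hasSum_iff.mp ?_⟩
    · simpa [Function.comp_def, hcons] using hasSum_mul_of_nonneg (hq₀ 0) hrest₀ (hq 0) hrest
    · simpa [Function.comp_def, hcons, Fin.sum_univ_succ] using
        hasSum_negMulLog_mul (hq₀ 0) hrest₀ (hq 0) hrest (hH 0) hHrest

section Geometric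

variable {p : ℝ}

lemma hasSum_geometric_pmf (hp₀ : 0 < p) (hp₁ : p ≤ 1) :
    HasSum (fun k : ℕ => (1 - p) ^ k * p) 1 := by
  have h := (hasSum_geometric_of_lt_one (sub_nonneg.2 hp₁) (sub_lt_self 1 hp₀)).mul_right p
  rwa [sub_sub_cancel, inv_mul_cancel₀ hp₀.ne'] at h

lemma hasSum_negMulLog_geometric_pmf (hp₀ : 0 < p) (hp₁ : p ≤ 1) :
    HasSum (fun k : ℕ => negMulLog ((1 - p) ^ k * p)) (binEntropy p / p) := by
  have hr : ‖1 - p‖ < 1 := by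
    rw [norm_of_nonneg (sub_nonneg.2 hp₁)]; linarith
  have h₁ := (hasSum_geometric_of_norm_lt_one hr).mul_right (negMulLog p)
  have h₂ := (hasSum_coe_mul_geometric_of_norm_lt_one hr).mul_left (-(p * log (1 - p)))
  have hterm (k : ℕ) : negMulLog ((1 - p) ^ k * p) =
      (1 - p) ^ k * negMulLog p + -(p * log (1 - p)) * (k * (1 - p) ^ k) := by
    rw [negMulLog_mul, negMulLog, log_pow]
    ring
  have hvalue : binEntropy p / p = (1 - (1 - p))⁻¹ * negMulLog p +
      -(p * log (1 - p)) * ((1 - p) / (1 - (1 - p)) ^ 2) := by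
    rw [binEntropy_eq_negMulLog_add_negMulLog_one_sub, negMulLog, negMulLog, sub_sub_cancel]
    field_simp
  simpa only [hterm, hvalue] using h₁.add h₂

lemma logb_one_div_add_one_sub_le_binEntropy_div (hp₀ : 0 < p) (hp₁ : p < 1) :
    logb 2 (1 / p) + (1 - p) ≤ binEntropy p / p / log 2 := by
  have hsplit : binEntropy p / p / log 2 =
      logb 2 (1 / p) + (1 - p) * -log (1 - p) / p / log 2 := by
    simp only [binEntropy, logb, one_div, log_inv]
    field_simp
  have hlog : p ≤ -log (1 - p) := by linarith [log_le_sub_one_of_pos (sub_pos.2 hp₁)]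
  have hlog₀ : 0 ≤ (1 - p) * -log (1 - p) / p :=
    div_nonneg (mul_nonneg (sub_pos.2 hp₁).le (hp₀.le.trans hlog)) hp₀.le
  calc logb 2 (1 / p) + (1 - p) = logb 2 (1 / p) + (1 - p) * p / p := by field_simp
    _ ≤ logb 2 (1 / p) + (1 - p) * -log (1 - p) / p := by gcongr
    _ ≤ logb 2 (1 / p) + (1 - p) * -log (1 - p) / p / log 2 :=
      add_le_add_right (le_div_self hlog₀ (log_pos one_lt_two) (by linarith [log_two_lt_d9])) _
    _ = binEntropy p / p / log 2 := hsplit.symm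

end Geometric

theorem joint_geometric_entropy (n : ℕ) (p : Fin n → ℝ)
    (hp : ∀ i, p i ∈ Set.Ioo (0 : ℝ) 1) :
    (∑ i, Real.logb 2 (1 / p i)) + (∑ i, (1 - p i)) ≤
      ∑' s : Fin n → ℕ,
        (∏ i, (1 - p i) ^ (s i) * p i) *
          Real.logb 2 (1 / ∏ i, (1 - p i) ^ (s i) * p i) := by
  have hentropy := (hasSum_prod_and_hasSum_negMulLog_prod (fun i k => (1 - p i) ^ k * p i)
    (fun i k => mul_nonneg (pow_nonneg (sub_nonneg.2 (hp i).2.le) k) (hp i).1.le)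
    (fun i => hasSum_geometric_pmf (hp i).1 (hp i).2.le)
    (fun i => hasSum_negMulLog_geometric_pmf (hp i).1 (hp i).2.le)).2
  simp only [mul_logb_one_div]
  rw [(hentropy.div_const (log 2)).tsum_eq, sum_div, ← sum_add_distrib]
  exact sum_le_sum fun i _ => logb_one_div_add_one_sub_le_binEntropy_div (hp i).1 (hp i).2
end
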